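/- For all a, s ∈ ℂ and p ∈ ℝ, one has A(a,s,p)³ ≥ B(a,s,p)²; equivalently, the homogeneous degree-8 polynomial F = A³ − B² on ℂ × ℂ × ℝ ≅ ℝ⁵ is everywhere nonnegative. -/

import Mathlib

/-!
Up to the factors `|s|^{2/3}` and `|s|`, the quantities `9A` and `27B` are `tr N² / 6` and
`det N / 2` for an explicit traceless Hermitian `3 × 3` matrix `N`. Its eigenvalues are real
with `λ₁ + λ₂ + λ₃ = 0`, so `A³ ≥ B²` becomes `(∑ λᵢ²)³ ≥ 54 (λ₁λ₂λ₃)²`: the nonnegativity of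
the discriminant of the characteristic polynomial of `N`.
-/

open Complex ComplexConjugate

noncomputable def Afun (a s : ℂ) (p : ℝ) : ℝ :=
  (1/9) * (‖s‖) ^ ((2:ℝ)/3)
    * (48 * (‖a‖) ^ 2 + 12 * (‖s‖) ^ 2 + p ^ 2)

noncomputable def Bfun (a s : ℂ) (p : ℝ) : ℝ :=
  (1/27) * (‖s‖)
    * ((216 * a ^ 2 * s + 216 * (starRingEnd ℂ a) ^ 2 * (starRingEnd ℂ s)).re
       + 72 * (‖a‖) ^ 2 * p - 36 * (‖s‖) ^ 2 * p + p ^ 3)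

theorem sum_sq_cube_ge_of_sum_eq_zero {x y z : ℝ} (h : x + y + z = 0) :
    54 * (x * y * z) ^ 2 ≤ (x ^ 2 + y ^ 2 + z ^ 2) ^ 3 := by
  obtain rfl : z = -x - y := by linarith
  have hdisc : (x ^ 2 + y ^ 2 + (-x - y) ^ 2) ^ 3 - 54 * (x * y * (-x - y)) ^ 2 =
      2 * ((x - y) * (x + 2 * y) * (2 * x + y)) ^ 2 := by ring
  linarith [sq_nonneg ((x - y) * (x + 2 * y) * (2 * x + y))]

namespace Matrix.IsHermitian

variable {𝕜 n : Type*} [RCLike 𝕜] [Fintype n] [DecidableEq n] {A : Matrix n n 𝕜}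

theorem trace_mul_self_eq_sum_sq_eigenvalues (hA : A.IsHermitian) :
    (A * A).trace = ∑ i, (hA.eigenvalues i : 𝕜) ^ 2 := by
  conv_lhs => rw [hA.spectral_theorem, ← map_mul, Unitary.conjStarAlgAut_apply, trace_mul_cycle,
    Unitary.coe_star_mul_self, one_mul, diagonal_mul_diagonal, trace_diagonal]
  simp [sq]

theorem det_sq_le_of_trace_eq_zero {A : Matrix (Fin 3) (Fin 3) 𝕜} (hA : A.IsHermitian)
    (h0 : A.trace = 0) :
    54 * RCLike.re A.det ^ 2 ≤ RCLike.re (A * A).trace ^ 3 := by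
  rw [hA.trace_eq_sum_eigenvalues, Fin.sum_univ_three] at h0
  rw [hA.det_eq_prod_eigenvalues, hA.trace_mul_self_eq_sum_sq_eigenvalues, Fin.prod_univ_three,
    Fin.sum_univ_three]
  norm_cast at h0 ⊢
  exact sum_sq_cube_ge_of_sum_eq_zero h0

end Matrix.IsHermitian

noncomputable def Apoly (a s : ℂ) (p : ℝ) : ℝ :=
  48 * ‖a‖ ^ 2 + 12 * ‖s‖ ^ 2 + p ^ 2

noncomputable def Bpoly (a s : ℂ) (p : ℝ) : ℝ :=
  (216 * a ^ 2 * s + 216 * conj a ^ 2 * conj s).re + 72 * ‖a‖ ^ 2 * p - 36 * ‖s‖ ^ 2 * p + p ^ 3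

noncomputable def modelMatrix (a s : ℂ) (p : ℝ) : Matrix (Fin 3) (Fin 3) ℂ :=
  !![2 * p, 6 * √2 * conj a, 6 * √2 * a;
     6 * √2 * a, -p, 6 * conj s;
     6 * √2 * conj a, 6 * s, -p]

theorem modelMatrix_isHermitian (a s : ℂ) (p : ℝ) : (modelMatrix a s p).IsHermitian := by
  ext i j
  fin_cases i <;> fin_cases j <;> simp [modelMatrix, Matrix.conjTranspose_apply]

theorem trace_modelMatrix (a s : ℂ) (p : ℝ) : (modelMatrix a s p).trace = 0 := by
  simp only [Matrix.trace_fin_three, modelMatrix, Matrix.of_apply, Matrix.cons_val',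
    Matrix.cons_val_zero, Matrix.cons_val_one, Matrix.cons_val, Matrix.cons_val_fin_one]
  ring

theorem re_trace_modelMatrix_mul_self (a s : ℂ) (p : ℝ) :
    (modelMatrix a s p * modelMatrix a s p).trace.re = 6 * Apoly a s p := by
  have h2 : √2 ^ 2 = 2 := Real.sq_sqrt (by norm_num)
  rw [Apoly, Complex.sq_norm, Complex.sq_norm, normSq_apply, normSq_apply]
  simp only [Matrix.trace_fin_three, Matrix.mul_apply, Fin.sum_univ_three, modelMatrix,
    Matrix.of_apply, Matrix.cons_val', Matrix.cons_val_zero, Matrix.cons_val_one, Matrix.cons_val,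
    Matrix.cons_val_fin_one]
  simp only [add_re, mul_re, mul_im, neg_re, neg_im, re_ofNat, im_ofNat, ofReal_re, ofReal_im,
    conj_re, conj_im]
  ring_nf
  simp only [h2]
  ring

theorem re_det_modelMatrix (a s : ℂ) (p : ℝ) :
    (modelMatrix a s p).det.re = 2 * Bpoly a s p := by
  have h2 : √2 ^ 2 = 2 := Real.sq_sqrt (by norm_num)
  rw [Bpoly, Complex.sq_norm, Complex.sq_norm, normSq_apply, normSq_apply]
  simp only [Matrix.det_fin_three, modelMatrix, Matrix.of_apply, Matrix.cons_val',
    Matrix.cons_val_zero, Matrix.cons_val_one, Matrix.cons_val, Matrix.cons_val_fin_one]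
  simp only [add_re, sub_re, mul_re, mul_im, neg_re, neg_im, re_ofNat, im_ofNat,
    ofReal_re, ofReal_im, conj_re, conj_im, sq]
  ring_nf
  simp only [h2]
  ring

theorem Bpoly_sq_le_Apoly_cube (a s : ℂ) (p : ℝ) : Bpoly a s p ^ 2 ≤ Apoly a s p ^ 3 := by
  have h := (modelMatrix_isHermitian a s p).det_sq_le_of_trace_eq_zero (trace_modelMatrix a s p)
  rw [RCLike.re_to_complex, RCLike.re_to_complex, re_det_modelMatrix,
    re_trace_modelMatrix_mul_self] at h
  linarith

/-- For all `a, s ∈ ℂ` and `p ∈ ℝ`, `A(a,s,p)³ ≥ B(a,s,p)²`; i.e. the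
degree-8 polynomial `F = A³ − B²` is everywhere nonnegative. -/
theorem A_cubed_ge_B_squared (a s : ℂ) (p : ℝ) :
    Bfun a s p ^ 2 ≤ Afun a s p ^ 3 := by
  have hA : Afun a s p ^ 3 = ‖s‖ ^ 2 / 729 * Apoly a s p ^ 3 := by
    have hs : (‖s‖ ^ ((2:ℝ)/3)) ^ 3 = ‖s‖ ^ 2 := by
      rw [← Real.rpow_mul_natCast (norm_nonneg s)]
      norm_num
    rw [Afun, Apoly, mul_pow, mul_pow, hs]
    ring
  have hB : Bfun a s p ^ 2 = ‖s‖ ^ 2 / 729 * Bpoly a s p ^ 2 := by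
    rw [Bfun, Bpoly]
    ring
  rw [hA, hB]
  exact mul_le_mul_of_nonneg_left (Bpoly_sq_le_Apoly_cube a s p) (by positivity)
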